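/- arXiv:1001.4891 — 3 statements merged into one kernel-verified Lean document; each statement's English description precedes it below -/
import Mathlib

section
/- Let F be a number field of odd degree n over ℚ, and let u be a unit of the ring of integers of F that is positive under every real embedding of F. If some complex embedding σ of F satisfies |σ(u)| = 1, then u = 1. -/
/-!
Complex conjugation sends `σ u` to `(σ u)⁻¹`, so `u⁻¹` is a conjugate of `u` and the minimal
polynomial `p` of `u` is a scalar multiple of its reverse: `X ^ d * p (1 / X) = a * p X`.
Evaluating at `X = ±1` with `d` odd gives `p 1 = a * p 1` and `p (-1) = -a * p (-1)`, so `p` has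
the root `1` or `-1`, i.e. `u = ±1`. An odd-degree field has a real embedding, which rules out
`u = -1`.
-/

open NumberField Polynomial

theorem Polynomial.eval_one_eq_zero_or_eval_neg_one_eq_zero_of_reverse_eq_C_mul
    {R : Type*} [CommRing R] [IsDomain R] [NeZero (2 : R)] {p : R[X]} {a : R}
    (hrev : p.reverse = C a * p) (hodd : Odd p.natDegree) :
    p.eval 1 = 0 ∨ p.eval (-1) = 0 := by
  by_contra! h
  let := invertibleOne (α := R)
  let := invertibleNeg (1 : R)
  have ha_one : a = 1 := by
    have := eval₂_reverse_mul_pow (RingHom.id R) (1 : R) p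
    rw [invOf_one, one_pow, mul_one, hrev] at this
    simpa [h.1] using this
  have ha_neg_one : a = -1 := by
    have := eval₂_reverse_mul_pow (RingHom.id R) (-1 : R) p
    rw [invOf_neg, invOf_one, hodd.neg_one_pow, hrev] at this
    simp only [eval₂_id, eval_mul, eval_C, mul_neg_one] at this
    exact mul_right_cancel₀ h.2 (by linear_combination -this)
  exact two_ne_zero (α := R) (by linear_combination ha_neg_one - ha_one)

theorem minpoly.reverse_eq_C_mul_of_minpoly_inv_eq {K L : Type*} [Field K] [Field L]
    [Algebra K L] {x : L} (hx : IsIntegral K x) (hx0 : x ≠ 0)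
    (h : minpoly K x⁻¹ = minpoly K x) :
    (minpoly K x).reverse = C (minpoly K x).reverse.leadingCoeff * minpoly K x := by
  refine eq_leadingCoeff_mul_of_monic_of_dvd_of_natDegree_le (minpoly.monic hx) ?_
    (reverse_natDegree_le _)
  let := invertibleOfNonzero hx0
  have hroot : Polynomial.aeval x⁻¹ (minpoly K x).reverse = 0 := by
    simpa [aeval_def, invOf_eq_inv] using
      (eval₂_reverse_eq_zero_iff (algebraMap K L) x (minpoly K x)).mpr (minpoly.aeval K x)
  simpa only [h] using minpoly.dvd K x⁻¹ hroot

theorem minpoly_inv_eq_of_norm_map_eq_one {F : Type*} [Field F] [CharZero F] (σ : F →+* ℂ)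
    {x : F} (hx : ‖σ x‖ = 1) : minpoly ℚ x⁻¹ = minpoly ℚ x := by
  have hconj : σ x⁻¹ = starRingEnd ℂ (σ x) := by
    rw [map_inv₀, Complex.inv_def, Complex.normSq_eq_norm_sq, hx]; simp
  rw [← minpoly.algHom_eq σ.toRatAlgHom σ.injective x⁻¹,
    ← minpoly.algHom_eq σ.toRatAlgHom σ.injective x]
  exact hconj ▸ minpoly.algHom_eq (starRingEnd ℂ).toRatAlgHom (RingHom.injective _) (σ x)

theorem NumberField.nonempty_ringHom_real_of_odd_finrank {K : Type*} [Field K] [NumberField K]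
    (h : Odd (Module.finrank ℚ K)) : Nonempty (K →+* ℝ) := by
  classical
  obtain ⟨w, hw⟩ := Fintype.card_pos_iff.mp (InfinitePlace.nrRealPlaces_pos_of_odd_finrank h)
  exact ⟨InfinitePlace.embedding_of_isReal hw⟩

theorem stmt_1 (F : Type*) [Field F] [NumberField F]
    (hodd : Odd (Module.finrank ℚ F))
    (u : (𝓞 F)ˣ)
    (hpos : ∀ τ : F →+* ℝ, 0 < τ (algebraMap (𝓞 F) F u))
    (σ : F →+* ℂ)
    (habs : ‖σ (algebraMap (𝓞 F) F u)‖ = 1) :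
    u = 1 := by
  set x : F := algebraMap (𝓞 F) F u
  have hx0 : x ≠ 0 := by simp [x]
  have hxint : IsIntegral ℚ x := .of_finite ℚ x
  have hdeg : Odd (minpoly ℚ x).natDegree := hodd.of_dvd_nat (minpoly.degree_dvd hxint)
  rcases eval_one_eq_zero_or_eval_neg_one_eq_zero_of_reverse_eq_C_mul
    (minpoly.reverse_eq_C_mul_of_minpoly_inv_eq hxint hx0
      (minpoly_inv_eq_of_norm_map_eq_one σ habs)) hdeg with h | h
  · have hx_one : (1 : F) = x := by simpa using minpoly.root hxint h
    simpa [x] using hx_one.symm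
  · have hx_neg_one : (-1 : F) = x := by simpa using minpoly.root hxint h
    obtain ⟨τ⟩ := nonempty_ringHom_real_of_odd_finrank hodd
    have := hpos τ
    rw [← hx_neg_one] at this
    norm_num at this
end

section
/- Let G = A ⋊ U be a semidirect product where A is the additive group of the ring of integers O_F of a number field, U is an abelian group of units of O_F acting on A by multiplication, and suppose U contains some unit u ≠ 1. Then the commutator [T_a, R_u] of the translation by a ∈ A and the action of u ∈ U equals translation by (1-u)·a; consequently, for every u ∈ U the subgroup (1-u)·O_F is contained in the commutator subgroup [G, G], and the image of A in the abelianization of G is finite. -/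
open NumberField SemidirectProduct
open scoped commutatorElement

/-- The monoid hom sending an additive automorphism to the corresponding
multiplicative automorphism of `Multiplicative A`. -/
def addAutToMulAut (A : Type*) [AddGroup A] : Multiplicative (AddAut A) →* MulAut (Multiplicative A) where
  toFun e := AddEquiv.toMultiplicative e.toAdd
  map_one' := rfl
  map_mul' _ _ := rfl

/-- The action of a group `U` of units of `𝓞 F` on the (multiplicative version of the)
additive group of `𝓞 F`, by multiplication. -/
noncomputable def unitsAction (F : Type*) [Field F] [NumberField F]
    (U : Subgroup (𝓞 F)ˣ) : U →* MulAut (Multiplicative (𝓞 F)) :=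
  (addAutToMulAut (𝓞 F)).comp ((DistribMulAction.toAddAut (𝓞 F)ˣ (𝓞 F)).comp U.subtype)


/-! The commutator of `T_a` and `R_u` is the translation by `(1 - u) a`, so the image of `O_F` in
the abelianization of `G` is a quotient of `O_F / (1 - u)`, which is finite as soon as `u ≠ 1`. -/

theorem MonoidHom.finite_range_of_le_ker {A G : Type*} [Group A] [Group G] (f : A →* G)
    {H : Subgroup A} [H.FiniteIndex] (hH : H ≤ f.ker) : Finite f.range := by
  have := Subgroup.finiteIndex_of_le hH
  exact Finite.of_equiv _ (QuotientGroup.quotientKerEquivRange f).toEquiv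

namespace SemidirectProduct

variable {N G : Type*} [Group N] [Group G] {φ : G →* MulAut N}

theorem commutatorElement_inl_inr (n : N) (g : G) :
    ⁅(inl n : N ⋊[φ] G), (inr g : N ⋊[φ] G)⁆ = inl (n * φ g n⁻¹) := by
  rw [commutatorElement_def, ← map_inv, ← map_inv inr, mul_assoc (inl n), mul_assoc (inl n),
    ← inl_aut, ← map_mul]

end SemidirectProduct

theorem Ideal.finiteIndex_toSubgroup_of_ne_bot {S : Type*} [CommRing S] [IsDomain S]
    [Module.Free ℤ S] [Module.Finite ℤ S] {I : Ideal S} (hI : I ≠ ⊥) :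
    I.toAddSubgroup.toSubgroup.FiniteIndex := by
  rw [AddSubgroup.finiteIndex_toSubgroup_iff]
  exact @AddSubgroup.finiteIndex_of_finite_quotient _ _ _ (Ideal.finiteQuotientOfFreeOfNeBot I hI)

section UnitsAction

variable (F : Type*) [Field F] [NumberField F] (U : Subgroup (𝓞 F)ˣ)

theorem unitsAction_apply (u : U) (a : 𝓞 F) :
    unitsAction F U u (Multiplicative.ofAdd a) =
      Multiplicative.ofAdd (((u : (𝓞 F)ˣ) : 𝓞 F) * a) :=
  rfl

theorem commutatorElement_inl_inr_unitsAction (a : 𝓞 F) (u : U) :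
    ⁅(inl (Multiplicative.ofAdd a) : Multiplicative (𝓞 F) ⋊[unitsAction F U] U),
        (inr u : Multiplicative (𝓞 F) ⋊[unitsAction F U] U)⁆ =
      inl (Multiplicative.ofAdd ((1 - ((u : (𝓞 F)ˣ) : 𝓞 F)) * a)) := by
  rw [commutatorElement_inl_inr, ← ofAdd_neg, unitsAction_apply, ← ofAdd_add, sub_mul, one_mul,
    mul_neg, sub_eq_add_neg]

theorem inl_mem_commutator_of_mem_span_one_sub (u : U) {x : 𝓞 F}
    (hx : x ∈ Ideal.span {(1 : 𝓞 F) - ((u : (𝓞 F)ˣ) : 𝓞 F)}) :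
    (inl (Multiplicative.ofAdd x) : Multiplicative (𝓞 F) ⋊[unitsAction F U] U) ∈
      commutator (Multiplicative (𝓞 F) ⋊[unitsAction F U] U) := by
  obtain ⟨c, rfl⟩ := Ideal.mem_span_singleton'.mp hx
  rw [mul_comm, ← commutatorElement_inl_inr_unitsAction]
  exact Subgroup.commutator_mem_commutator (Subgroup.mem_top _) (Subgroup.mem_top _)

end UnitsAction

theorem stmt_8 (F : Type*) [Field F] [NumberField F] (U : Subgroup (𝓞 F)ˣ)
    (hU : ∃ u ∈ U, u ≠ 1) :
    (∀ (a : 𝓞 F) (u : U),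
      ⁅(inl (Multiplicative.ofAdd a) : Multiplicative (𝓞 F) ⋊[unitsAction F U] U),
        (inr u : Multiplicative (𝓞 F) ⋊[unitsAction F U] U)⁆ =
        inl (Multiplicative.ofAdd ((1 - ((u : (𝓞 F)ˣ) : 𝓞 F)) * a))) ∧
    (∀ u : U, ∀ x ∈ Ideal.span {(1 : 𝓞 F) - ((u : (𝓞 F)ˣ) : 𝓞 F)},
      (inl (Multiplicative.ofAdd x) : Multiplicative (𝓞 F) ⋊[unitsAction F U] U) ∈
        commutator (Multiplicative (𝓞 F) ⋊[unitsAction F U] U)) ∧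
    Finite ((Abelianization.of.comp
      (inl : Multiplicative (𝓞 F) →* Multiplicative (𝓞 F) ⋊[unitsAction F U] U)).range) := by
  refine ⟨commutatorElement_inl_inr_unitsAction F U, fun u _ hx ↦
    inl_mem_commutator_of_mem_span_one_sub F U u hx, ?_⟩
  obtain ⟨u, huU, hu⟩ := hU
  set I := Ideal.span {(1 : 𝓞 F) - (u : 𝓞 F)}
  have hI : I ≠ ⊥ := by
    rwa [Ne, Ideal.span_singleton_eq_bot, sub_eq_zero, eq_comm, Units.val_eq_one]
  have := Ideal.finiteIndex_toSubgroup_of_ne_bot hI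
  exact MonoidHom.finite_range_of_le_ker _ (H := I.toAddSubgroup.toSubgroup) fun x hx ↦
    Abelianization.commutator_subset_ker Abelianization.of
      (inl_mem_commutator_of_mem_span_one_sub F U ⟨u, huU⟩ hx)
end

section
/- Let F be a number field of even degree n = [F:ℚ] with exactly 2 non-real complex embeddings σ, conj(σ). Suppose there exists a totally positive unit u ≠ 1 of O_F with |σ(u)| = 1. Then F is a quadratic extension of a totally real number field E, and for every totally positive unit v of O_F one has |σ(v)|² = Nm_{F/E}(v) (viewing E ⊂ ℝ via the embedding induced by σ). -/
open NumberField ComplexEmbedding IntermediateField Module Polynomial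
open scoped ComplexConjugate

/-! Since `|σ u| = 1`, `σ (u⁻¹) = conj (σ u)`, so `σ` is real on `E = ℚ(u + u⁻¹)`. Every embedding
of `E` extends to `F`, where it is real or one of `σ`, `conj σ`; hence `E` is totally real.
If `σ u` is not real, every `ℚ(u)`-embedding of `F` is non-real, hence `σ` (as `conj σ` moves
`σ u`), so `F = ℚ(u)`; then `u ∉ E` is a root of `X² - (u + u⁻¹) X + 1` and `[F : E] = 2`.
If `σ u` is real, then `u = -1`, total positivity leaves no real embedding, so `[F : ℚ] = 2` and
`E = ℚ`. Either way the two `E`-embeddings of `F` are `σ` and `conj σ`, and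
`σ (Nm_{F/E} v) = σ v · conj (σ v) = |σ v|²`. -/

theorem finrank_eq_two_of_add_inv_mem {E F : Type*} [Field E] [Field F] [Algebra E F] {x : F}
    (htop : E⟮x⟯ = ⊤) (hw : x + x⁻¹ ∈ (algebraMap E F).range) (hx : x ∉ (algebraMap E F).range) :
    finrank E F = 2 := by
  obtain ⟨w, hw⟩ := hw
  have hx0 : x ≠ 0 := by
    rintro rfl
    exact hx ⟨0, map_zero _⟩
  let p : E[X] := X ^ 2 - C w * X + 1
  have hp_monic : p.Monic := by unfold p; monicity!
  have hp_deg : p.natDegree = 2 := by unfold p; compute_degree!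
  have hp_root : aeval x p = 0 := by
    simp only [p, map_add, map_sub, map_mul, map_pow, aeval_X, aeval_C, map_one, hw]
    field_simp
    ring
  have hint : IsIntegral E x := ⟨p, hp_monic, hp_root⟩
  rw [← finrank_top', ← htop, adjoin.finrank hint]
  refine le_antisymm ?_ ((minpoly.two_le_natDegree_iff hint).mpr hx)
  exact hp_deg ▸ natDegree_le_natDegree (minpoly.min E x hp_monic hp_root)

namespace NumberField.ComplexEmbedding

variable {F : Type*} [Field F]

theorem conj_apply_add_inv_eq {σ : F →+* ℂ} {x : F} (hx : ‖σ x‖ = 1) :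
    conj (σ (x + x⁻¹)) = σ (x + x⁻¹) := by
  rw [map_add, map_inv₀, Complex.inv_eq_conj hx, map_add, Complex.conj_conj, add_comm]

theorem eq_one_or_eq_neg_one_of_conj_eq {σ : F →+* ℂ} {x : F} (hx1 : ‖σ x‖ = 1)
    (hx : conj (σ x) = σ x) : x = 1 ∨ x = -1 := by
  obtain ⟨r, hr⟩ := Complex.conj_eq_iff_real.mp hx
  rw [hr, Complex.norm_real, Real.norm_eq_abs] at hx1
  rcases abs_eq (zero_le_one' ℝ) |>.mp hx1 with rfl | rfl
  · exact .inl (σ.injective (by simpa using hr))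
  · exact .inr (σ.injective (by simpa using hr))

theorem eq_or_eq_conjugate_of_card_eq_two {σ : F →+* ℂ} (hσ : ¬IsReal σ)
    (h2 : Nat.card {φ : F →+* ℂ // ¬IsReal φ} = 2) {φ : F →+* ℂ} (hφ : ¬IsReal φ) :
    φ = σ ∨ φ = conjugate σ := by
  obtain ⟨τ, -, huniq⟩ :=
    (Nat.card_eq_two_iff' (⟨σ, hσ⟩ : {φ : F →+* ℂ // ¬IsReal φ})).mp h2
  by_contra! h
  have hconj : (⟨conjugate σ, isReal_conjugate_iff.not.mpr hσ⟩ : {φ // ¬IsReal φ}) = τ :=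
    huniq _ fun he ↦ hσ (isReal_iff.mpr (congrArg Subtype.val he))
  have hφτ : (⟨φ, hφ⟩ : {φ // ¬IsReal φ}) = τ :=
    huniq _ fun he ↦ h.1 (congrArg Subtype.val he)
  exact h.2 (congrArg Subtype.val (hφτ.trans hconj.symm))

theorem finrank_eq_two_of_forall_not_isReal [NumberField F]
    (h2 : Nat.card {φ : F →+* ℂ // ¬IsReal φ} = 2) (h : ∀ φ : F →+* ℂ, ¬IsReal φ) :
    finrank ℚ F = 2 := by
  rw [← Embeddings.card F ℂ, ← Nat.card_eq_fintype_card,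
    ← Nat.card_congr (Equiv.subtypeUnivEquiv h), h2]

theorem isReal_comp_algebraMap_adjoin_simple [CharZero F] {σ : F →+* ℂ} {w : F}
    (hw : conj (σ w) = σ w) : IsReal (σ.comp (algebraMap ℚ⟮w⟯ F)) := by
  have hle : ℚ⟮w⟯.toSubfield ≤ RingHom.eqLocusField (conjugate σ) σ :=
    adjoin_le_subfield _ _ (by rintro _ ⟨q, rfl⟩; simp) (by simpa using hw)
  ext1 ⟨x, hx⟩
  exact hle hx

theorem isReal_of_isReal_comp_algebraMap {E : Type*} [Field E] [Algebra E F]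
    [Algebra.IsAlgebraic E F] {σ : F →+* ℂ}
    (hnr : ∀ φ : F →+* ℂ, ¬IsReal φ → φ = σ ∨ φ = conjugate σ)
    (hσE : IsReal (σ.comp (algebraMap E F))) (ψ : E →+* ℂ) : IsReal ψ := by
  rw [← lift_comp_algebraMap F ψ]
  by_cases h : IsReal (lift F ψ)
  · exact h.comp _
  · rcases hnr _ h with h | h <;> rw [h]
    · exact hσE
    · rw [conjugate_comp]
      exact isReal_conjugate_iff.mpr hσE

theorem adjoin_simple_eq_top_of_conj_ne [NumberField F] {σ : F →+* ℂ}
    (hnr : ∀ φ : F →+* ℂ, ¬IsReal φ → φ = σ ∨ φ = conjugate σ) {x : F}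
    (hx : conj (σ x) ≠ σ x) : ℚ⟮x⟯ = ⊤ := by
  let _ : Algebra ℚ⟮x⟯ ℂ := (σ.comp (algebraMap ℚ⟮x⟯ F)).toAlgebra
  have hφx (φ : F →ₐ[ℚ⟮x⟯] ℂ) : φ x = σ x := φ.commutes ⟨x, mem_adjoin_simple_self ℚ x⟩
  -- every `ℚ⟮x⟯`-embedding sends `x` to the non-real `σ x`, so it can only be `σ`
  have hφσ (φ : F →ₐ[ℚ⟮x⟯] ℂ) : (φ : F →+* ℂ) = σ := by
    have hnr_φ : ¬IsReal (φ : F →+* ℂ) := fun h ↦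
      hx (by simpa [hφx] using RingHom.congr_fun h x)
    refine (hnr _ hnr_φ).resolve_right fun h ↦ hx ?_
    simpa [hφx] using (RingHom.congr_fun h x).symm
  have hsub : Subsingleton (F →ₐ[ℚ⟮x⟯] ℂ) :=
    ⟨fun φ ψ ↦ AlgHom.coe_ringHom_injective ((hφσ φ).trans (hφσ ψ).symm)⟩
  rw [← finrank_eq_one_iff_eq_top, ← AlgHom.card ℚ⟮x⟯ F ℂ]
  exact le_antisymm (Fintype.card_le_one_iff_subsingleton.mpr hsub)
    (by rw [AlgHom.card]; exact finrank_pos)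

theorem norm_sq_eq_algebraMap_norm {E : Type*} [Field E] [Algebra E F]
    [Algebra.IsSeparable E F] (hEF : finrank E F = 2) {σ : F →+* ℂ} (hσ : ¬IsReal σ)
    (hσE : IsReal (σ.comp (algebraMap E F))) (x : F) :
    (‖σ x‖ : ℂ) ^ 2 = σ (algebraMap E F (Algebra.norm E x)) := by
  classical
  have : FiniteDimensional E F := Module.finite_of_finrank_eq_succ hEF
  let _ : Algebra E ℂ := (σ.comp (algebraMap E F)).toAlgebra
  let σE : F →ₐ[E] ℂ := { σ with commutes' := fun _ ↦ rfl }
  let σE' : F →ₐ[E] ℂ := { conjugate σ with commutes' := fun r ↦ RingHom.congr_fun hσE r }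
  have hne : σE ≠ σE' := fun h ↦ hσ (isReal_iff.mpr (congrArg AlgHom.toRingHom h).symm)
  have huniv : (Finset.univ : Finset (F →ₐ[E] ℂ)) = {σE, σE'} :=
    (Finset.eq_univ_of_card _ (by rw [Finset.card_pair hne, AlgHom.card, hEF])).symm
  change _ = algebraMap E ℂ (Algebra.norm E x)
  rw [Algebra.norm_eq_prod_embeddings, huniv, Finset.prod_pair hne]
  change _ = σ x * conj (σ x)
  rw [Complex.mul_conj, ← Complex.sq_norm]
  push_cast
  rfl

end NumberField.ComplexEmbedding

theorem stmt_16_general (F : Type*) [Field F] [NumberField F]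
    (σ : F →+* ℂ) (hσ : ¬ ComplexEmbedding.IsReal σ)
    (h2 : Nat.card {φ : F →+* ℂ // ¬ ComplexEmbedding.IsReal φ} = 2)
    (u : (𝓞 F)ˣ) (hu : u ≠ 1)
    (hupos : ∀ τ : F →+* ℝ, 0 < τ (algebraMap (𝓞 F) F u))
    (huabs : ‖σ (algebraMap (𝓞 F) F u)‖ = 1) :
    ∃ E : IntermediateField ℚ F,
      (∀ ψ : E →+* ℂ, ComplexEmbedding.IsReal ψ) ∧
      Module.finrank E F = 2 ∧
      ∀ v : (𝓞 F)ˣ, (∀ τ : F →+* ℝ, 0 < τ (algebraMap (𝓞 F) F v)) →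
        ((‖σ (algebraMap (𝓞 F) F v)‖ : ℂ)) ^ 2 =
          σ (algebraMap E F (Algebra.norm E (algebraMap (𝓞 F) F v))) := by
  have hnr : ∀ φ : F →+* ℂ, ¬IsReal φ → φ = σ ∨ φ = conjugate σ :=
    fun _ ↦ eq_or_eq_conjugate_of_card_eq_two hσ h2
  set x : F := algebraMap (𝓞 F) F u
  let E := ℚ⟮x + x⁻¹⟯
  have hσE : IsReal (σ.comp (algebraMap E F)) :=
    isReal_comp_algebraMap_adjoin_simple (conj_apply_add_inv_eq huabs)
  have hEF : finrank E F = 2 := by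
    by_cases hreal : conj (σ x) = σ x
    · have hx1 : x ≠ 1 := fun h ↦ hu (Units.val_eq_one.mp
        (FaithfulSMul.algebraMap_injective (𝓞 F) F (h.trans (map_one _).symm)))
      have hx : x = -1 := (eq_one_or_eq_neg_one_of_conj_eq huabs hreal).resolve_left hx1
      have hcomplex (φ : F →+* ℂ) : ¬IsReal φ := fun hφ ↦
        absurd (hupos hφ.embedding) (by simp [x, hx])
      have hE : E = ⊥ := adjoin_simple_eq_bot_iff.mpr (mem_bot.mpr ⟨-2, by rw [hx]; norm_num⟩)
      rw [hE, finrank_bot', finrank_eq_two_of_forall_not_isReal h2 hcomplex]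
    · refine finrank_eq_two_of_add_inv_mem ?_ ⟨⟨_, mem_adjoin_simple_self ℚ _⟩, rfl⟩ ?_
      · exact adjoin_eq_top_of_adjoin_eq_top ℚ (adjoin_simple_eq_top_of_conj_ne hnr hreal)
      · rintro ⟨y, hy⟩
        exact hreal (by simpa [hy] using RingHom.congr_fun hσE y)
  exact ⟨E, isReal_of_isReal_comp_algebraMap hnr hσE, hEF,
    fun v _ ↦ norm_sq_eq_algebraMap_norm hEF hσ hσE _⟩

theorem stmt_16 (F : Type*) [Field F] [NumberField F]
    (heven : Even (Module.finrank ℚ F))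
    (σ : F →+* ℂ) (hσ : ¬ ComplexEmbedding.IsReal σ)
    (h2 : Nat.card {φ : F →+* ℂ // ¬ ComplexEmbedding.IsReal φ} = 2)
    (u : (𝓞 F)ˣ) (hu : u ≠ 1)
    (hupos : ∀ τ : F →+* ℝ, 0 < τ (algebraMap (𝓞 F) F u))
    (huabs : ‖σ (algebraMap (𝓞 F) F u)‖ = 1) :
    ∃ E : IntermediateField ℚ F,
      (∀ ψ : E →+* ℂ, ComplexEmbedding.IsReal ψ) ∧
      Module.finrank E F = 2 ∧
      ∀ v : (𝓞 F)ˣ, (∀ τ : F →+* ℝ, 0 < τ (algebraMap (𝓞 F) F v)) →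
        ((‖σ (algebraMap (𝓞 F) F v)‖ : ℂ)) ^ 2 =
          σ (algebraMap E F (Algebra.norm E (algebraMap (𝓞 F) F v))) :=
  stmt_16_general F σ hσ h2 u hu hupos huabs
end
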